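/- arXiv:1308.3829 — 4 statements merged into one kernel-verified Lean document; each statement's English description precedes it below -/
import Mathlib

section
/- Let T be a tree with at least 2 nodes and k a positive integer. Let CT be the graph obtained from T by replacing each vertex of T with a clique of size at least k, and making all vertices of cliques corresponding to adjacent vertices of T mutually adjacent. Then for any partition of V(CT) into sets W and B with |W| ≥ k and |B| ≥ k, the graph CT has a matching of size k in which every edge has one endpoint in W and one endpoint in B. -/
/-!
Removing fewer than `k` vertices from the blown-up tree leaves every clique nonempty, so what
remains is still connected. Both colour classes have at least `k` vertices, so a white and a black
vertex survive, and a path between them uses a white–black edge. Hence no set of fewer than `k`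
vertices covers the white–black edges, and Hall's theorem with deficiency (the defect form of
König's theorem) yields a white–black matching of size `k`.
-/

/-- A matching of size `m` all of whose edges have one endpoint in `W` and the
other in `B`. -/
def HasCrossMatchingWB {V : Type*} (G : SimpleGraph V) (W B : Set V) (m : ℕ) : Prop :=
  ∃ f : Fin m → V × V,
    (∀ i, G.Adj (f i).1 (f i).2 ∧ (f i).1 ∈ W ∧ (f i).2 ∈ B) ∧
    (∀ i j : Fin m, i ≠ j → (f i).1 ≠ (f j).1 ∧ (f i).2 ≠ (f j).2) ∧
    (∀ i j : Fin m, (f i).1 ≠ (f j).2)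

open Finset

theorem Finset.exists_injective_of_card_le_card_biUnion_add {α β : Type*} [Fintype α]
    [DecidableEq β] (t : α → Finset β) (d : ℕ)
    (h : ∀ s : Finset α, #s ≤ #(s.biUnion t) + d) :
    ∃ S : Finset α, Fintype.card α ≤ #S + d ∧
      ∃ f : S → β, Function.Injective f ∧ ∀ x : S, f x ∈ t x := by
  classical
  -- padding every `t x` with the same `d` dummies restores Hall's condition
  let t' : α → Finset (β ⊕ Fin d) := fun x => (t x).map .inl ∪ univ.map .inr
  have hall : ∀ s : Finset α, #s ≤ #(s.biUnion t') := by
    intro s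
    rcases s.eq_empty_or_nonempty with rfl | ⟨x, hx⟩
    · simp
    have : s.biUnion t' = (s.biUnion t).map .inl ∪ univ.map .inr := by
      ext (b | i)
      · simp [t']
      · simpa [t'] using ⟨x, hx⟩
    rw [this, card_union_of_disjoint (by simp [disjoint_left]), card_map, card_map, card_univ,
      Fintype.card_fin]
    exact h s
  obtain ⟨g, hg, hgt⟩ := (all_card_le_biUnion_card_iff_exists_injective t').mp hall
  let S : Finset α := {x | (g x).isLeft}
  have hSc : #Sᶜ ≤ d := by
    refine (card_le_card_of_injOn g (t := univ.map .inr) (fun x hx => ?_) hg.injOn).trans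
      (by simp)
    cases hx : g x <;> simp_all [S]
  refine ⟨S, by rw [card_compl] at hSc; have := card_le_univ S; omega,
    fun x => (g x).getLeft (mem_filter.1 x.2).2, fun x y hxy => ?_, fun x => ?_⟩
  · exact Subtype.ext (hg (by simpa using hxy))
  · have := hgt x
    obtain ⟨b, hb⟩ := Sum.isLeft_iff.1 (mem_filter.1 x.2).2
    simp_all [t']

theorem hasCrossMatchingWB_of_forall_card_lt {V : Type*} [Finite V] (G : SimpleGraph V)
    {W B : Set V} (hdisj : Disjoint W B) {k : ℕ}
    (hcover : ∀ C : Finset V, #C < k →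
      ∃ w ∈ W, ∃ b ∈ B, w ∉ C ∧ b ∉ C ∧ G.Adj w b) :
    HasCrossMatchingWB G W B k := by
  classical
  have := Fintype.ofFinite V
  have hWk : k ≤ #W.toFinset := by
    by_contra! hlt
    obtain ⟨w, hw, -, -, hwC, -⟩ := hcover _ hlt
    exact hwC (Set.mem_toFinset.2 hw)
  let t : W → Finset V := fun w => {b | b ∈ B ∧ G.Adj w b}
  have hall : ∀ s : Finset W, #s ≤ #(s.biUnion t) + (#W.toFinset - k) := by
    intro s
    by_contra! hlt
    have hsW : s.map (.subtype _) ⊆ W.toFinset := by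
      intro x hx
      obtain ⟨y, -, rfl⟩ := mem_map.1 hx
      exact Set.mem_toFinset.2 y.2
    -- `C` covers every crossing edge, yet is too small
    let C := (W.toFinset \ s.map (.subtype _)) ∪ s.biUnion t
    have hC : #C < k := calc
      #C ≤ #(W.toFinset \ s.map (.subtype _)) + #(s.biUnion t) := card_union_le _ _
      _ = #W.toFinset - #s + #(s.biUnion t) := by rw [card_sdiff_of_subset hsW, card_map]
      _ < k := by have := card_le_card hsW; rw [card_map] at this; omega
    obtain ⟨w, hw, b, hb, hwC, hbC, hadj⟩ := hcover C hC
    have hws : w ∈ s.map (.subtype _) := by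
      by_contra hws
      exact hwC (mem_union_left _ (mem_sdiff.2 ⟨Set.mem_toFinset.2 hw, hws⟩))
    obtain ⟨w', hw's, rfl⟩ := mem_map.1 hws
    exact hbC (mem_union_right _ (mem_biUnion.2 ⟨w', hw's, by simpa [t, hb] using hadj⟩))
  obtain ⟨S, hS, f, hf, hft⟩ := exists_injective_of_card_le_card_biUnion_add t _ hall
  obtain ⟨e⟩ : Nonempty (Fin k ↪ S) :=
    Function.Embedding.nonempty_of_card_le <| by
      have := Set.toFinset_card W
      simp only [Fintype.card_fin, Fintype.card_coe]
      omega
  have hfB (x : S) : f x ∈ B ∧ G.Adj x (f x) := by simpa [t] using hft x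
  refine ⟨fun i => ((e i : W), f (e i)), fun i => ⟨(hfB _).2, (e i : W).2, (hfB _).1⟩,
    fun i j hij => ⟨?_, hf.ne (e.injective.ne hij)⟩,
    fun i j => hdisj.ne_of_mem (e i : W).2 (hfB _).1⟩
  exact fun h => e.injective.ne hij (Subtype.ext (Subtype.ext h))

namespace SimpleGraph

variable {V : Type*} {G : SimpleGraph V}

theorem Reachable.exists_adj_mem_notMem {S : Set V} {u v : V} (huv : G.Reachable u v)
    (hu : u ∈ S) (hv : v ∉ S) : ∃ a ∈ S, ∃ b ∉ S, G.Adj a b := by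
  obtain ⟨p⟩ := huv
  obtain ⟨d, -, hd₁, hd₂⟩ := p.exists_boundary_dart S hu hv
  exact ⟨_, hd₁, _, hd₂, d.adj⟩

variable {ι : Type*} (T : SimpleGraph ι) (X : ι → Type*)

/-- The graph `CT` of the paper, with the clique `X u` over the vertex `u` of `T`. -/
def cliqueBlowup : SimpleGraph (Σ u, X u) :=
  fromRel fun a b => a.1 = b.1 ∨ T.Adj a.1 b.1

variable {T X}

theorem cliqueBlowup_adj {a b : Σ u, X u} :
    (cliqueBlowup T X).Adj a b ↔ a ≠ b ∧ (a.1 = b.1 ∨ T.Adj a.1 b.1) := by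
  rw [cliqueBlowup, fromRel_adj, eq_comm (a := b.1), T.adj_comm b.1, or_self]

theorem exists_mk_notMem_of_card_lt [∀ u, Fintype (X u)] (C : Finset (Σ u, X u)) (u : ι)
    (hC : #C < Fintype.card (X u)) : ∃ x : X u, ⟨u, x⟩ ∉ C := by
  obtain ⟨_, hx, hxC⟩ := exists_mem_notMem_of_card_lt_card
    (hC.trans_eq (card_map (s := univ) (Function.Embedding.sigmaMk u)).symm)
  obtain ⟨x, -, rfl⟩ := mem_map.1 hx
  exact ⟨x, hxC⟩

theorem Preconnected.cliqueBlowup_induce_compl [∀ u, Fintype (X u)] (hT : T.Preconnected)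
    (C : Finset (Σ u, X u)) (hC : ∀ u, #C < Fintype.card (X u)) :
    ((cliqueBlowup T X).induce (↑C)ᶜ).Preconnected := by
  choose r hr using fun u => exists_mk_notMem_of_card_lt C u (hC u)
  let φ : T →g (cliqueBlowup T X).induce (↑C)ᶜ :=
    ⟨fun u => ⟨⟨u, r u⟩, hr u⟩,
      fun h => cliqueBlowup_adj.2 ⟨fun e => h.ne (congrArg Sigma.fst e), Or.inr h⟩⟩
  have hφ : ∀ p, ((cliqueBlowup T X).induce (↑C)ᶜ).Reachable p (φ p.1.1) := by
    rintro ⟨⟨u, x⟩, hx⟩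
    by_cases hxr : x = r u
    · subst hxr; rfl
    · have hne : (⟨u, x⟩ : Σ u, X u) ≠ ⟨u, r u⟩ := by simpa using hxr
      exact Adj.reachable (cliqueBlowup_adj.2 ⟨hne, Or.inl rfl⟩)
  intro p q
  exact (hφ p).trans (((hT p.1.1 q.1.1).map φ).trans (hφ q).symm)

theorem exists_cross_adj_cliqueBlowup [∀ u, Fintype (X u)] (hT : T.Preconnected)
    {k : ℕ} (hX : ∀ u, k ≤ Fintype.card (X u)) {W B : Set (Σ u, X u)}
    (hWB : W ∪ B = Set.univ) (hdisj : Disjoint W B) (hW : k ≤ W.ncard) (hB : k ≤ B.ncard)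
    (C : Finset (Σ u, X u)) (hC : #C < k) :
    ∃ w ∈ W, ∃ b ∈ B, w ∉ C ∧ b ∉ C ∧ (cliqueBlowup T X).Adj w b := by
  obtain ⟨x, hxW, hxC⟩ := Set.exists_mem_notMem_of_ncard_lt_ncard
    ((Set.ncard_coe_finset C).trans_lt (hC.trans_le hW))
  obtain ⟨y, hyB, hyC⟩ := Set.exists_mem_notMem_of_ncard_lt_ncard
    ((Set.ncard_coe_finset C).trans_lt (hC.trans_le hB))
  have hconn := hT.cliqueBlowup_induce_compl C fun u => hC.trans_le (hX u)
  obtain ⟨a, haW, b, hbW, hab⟩ := (hconn ⟨x, hxC⟩ ⟨y, hyC⟩).exists_adj_mem_notMem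
    (S := Subtype.val ⁻¹' W) hxW (hdisj.notMem_of_mem_right hyB)
  have hbB : b.1 ∈ B := ((hWB ▸ Set.mem_univ b.1 : b.1 ∈ W ∪ B)).resolve_left hbW
  exact ⟨a, haW, b, hbB, a.2, b.2, hab⟩

end SimpleGraph

theorem stmt4_general {ι : Type*} [Fintype ι] (T : SimpleGraph ι) (hT : T.IsTree)
    (k : ℕ)
    (sz : ι → ℕ) (hsz : ∀ u, k ≤ sz u)
    (W B : Set (Σ u : ι, Fin (sz u)))
    (hWB : W ∪ B = Set.univ) (hdisj : W ∩ B = ∅)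
    (hW : k ≤ W.ncard) (hB : k ≤ B.ncard) :
    HasCrossMatchingWB
      (SimpleGraph.fromRel
        (fun a b : Σ u : ι, Fin (sz u) => a.1 = b.1 ∨ T.Adj a.1 b.1)) W B k := by
  have hdisj' : Disjoint W B := Set.disjoint_iff_inter_eq_empty.2 hdisj
  exact hasCrossMatchingWB_of_forall_card_lt (SimpleGraph.cliqueBlowup T fun u => Fin (sz u))
    hdisj' (SimpleGraph.exists_cross_adj_cliqueBlowup hT.connected.preconnected
      (by simpa using hsz) hWB hdisj' hW hB)

/-- crossing-matching lemma for trees of cliques. -/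
theorem stmt4 {ι : Type*} [Fintype ι] (T : SimpleGraph ι) (hT : T.IsTree)
    (hcard : 2 ≤ Fintype.card ι) (k : ℕ) (hk : 0 < k)
    (sz : ι → ℕ) (hsz : ∀ u, k ≤ sz u)
    (W B : Set (Σ u : ι, Fin (sz u)))
    (hWB : W ∪ B = Set.univ) (hdisj : W ∩ B = ∅)
    (hW : k ≤ W.ncard) (hB : k ≤ B.ncard) :
    HasCrossMatchingWB
      (SimpleGraph.fromRel
        (fun a b : Σ u : ι, Fin (sz u) => a.1 = b.1 ∨ T.Adj a.1 b.1)) W B k :=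
  stmt4_general T hT k sz hsz W B hWB hdisj hW hB
end

section
/- Let T_r denote the complete binary tree of height r and let CT_{r,k} be obtained from T_r by replacing each node by a clique of size k and joining completely the cliques of adjacent nodes. Then for every odd r ≥ 1, the matching width of CT_{r,k} is at least (r+1)k/2. -/
def HasCrossMatching {V : Type*} (G : SimpleGraph V) (S : Set V) (m : ℕ) : Prop :=
  ∃ f : Fin m → V × V,
    (∀ i, G.Adj (f i).1 (f i).2 ∧ (f i).1 ∈ S ∧ (f i).2 ∉ S) ∧
    ∀ i j : Fin m, i ≠ j → (f i).1 ≠ (f j).1 ∧ (f i).2 ≠ (f j).2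

def prefixSet {V : Type*} [Fintype V] (π : Fin (Fintype.card V) ≃ V) (t : ℕ) : Set V :=
  {v | ((π.symm v : Fin (Fintype.card V)) : ℕ) < t}

noncomputable def orderMW {V : Type*} [Fintype V] (G : SimpleGraph V)
    (π : Fin (Fintype.card V) ≃ V) : ℕ :=
  sSup {m | ∃ t, HasCrossMatching G (prefixSet π t) m}

noncomputable def matchingWidth {V : Type*} [Fintype V] (G : SimpleGraph V) : ℕ :=
  sInf {w | ∃ π : Fin (Fintype.card V) ≃ V, w = orderMW G π}

/-- Nodes of the complete binary tree of height `r`: a level `i ≤ r` and an index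
among the `2^i` nodes of that level. -/
abbrev BTNode (r : ℕ) := Σ i : Fin (r + 1), Fin (2 ^ (i : ℕ))

/-- The complete binary tree `T_r` of height `r`: node `(i+1, j)` is a child of
node `(i, j / 2)`. -/
def btreeGraph (r : ℕ) : SimpleGraph (BTNode r) :=
  SimpleGraph.fromRel
    (fun a b => (a.1 : ℕ) + 1 = (b.1 : ℕ) ∧ (b.2 : ℕ) / 2 = (a.2 : ℕ))

/-- `CT_{r,k}`: each node of `T_r` is replaced by a clique of size `k`, and the
cliques of adjacent nodes are completely joined. -/
def cliqueTree (r k : ℕ) : SimpleGraph (BTNode r × Fin k) :=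
  SimpleGraph.fromRel (fun a b => a.1 = b.1 ∨ (btreeGraph r).Adj a.1 b.1)

/-!
Fix a vertex order and call a time `t` a cut. For a set `R` of tree nodes that is connected in
the tree, if at least `k` vertices of the blown-up `R` lie on each side of the cut, then a defect
form of Hall's theorem yields `k` disjoint edges across the cut inside `R`: an in-vertex set `A`
either meets every clique of `R`, and then sees all out-vertices, or misses a clique adjacent
to one it meets, whose out-vertices it sees and whose in-vertices it cannot use.

Now let `v` root a subtree of odd height `2s + 1`, and let `[c, d]` be an interval of cuts with at
most `k` of its vertices before `c` and at most `k` after `d`. By induction on `s`, some cut in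
`[c, d]` is crossed by `(s + 1) k` disjoint edges inside the subtree. Each grandchild `g` of `v`
has a window `[a_g, b_g] ⊆ [c, d]` with exactly `k` of its subtree vertices before `a_g` and `k`
after `b_g`. The rest of the subtree of `v` contains the subtrees of the other grandchildren, so
for all but at most two grandchildren it keeps at least `k` vertices on each side of every cut of
the window. Recursing into such a `g` gives `(s + 1) k` edges, and the rest of the subtree adds
`k` more at the same cut. At the root, where `r = 2s + 1`, the whole range of cuts is such an
interval.
-/

open Finset

section CrossMatching

variable {V : Type*}

structure IsCrossMatching (G : SimpleGraph V) (S : Set V) (U : Finset V)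
    (M : Finset (V × V)) : Prop where
  subset : M ⊆ U ×ˢ U
  adj : ∀ e ∈ M, G.Adj e.1 e.2
  fst_mem : ∀ e ∈ M, e.1 ∈ S
  snd_notMem : ∀ e ∈ M, e.2 ∉ S
  injOn_fst : Set.InjOn Prod.fst (M : Set (V × V))
  injOn_snd : Set.InjOn Prod.snd (M : Set (V × V))

namespace IsCrossMatching

variable {G : SimpleGraph V} {S : Set V} {U U₁ U₂ : Finset V} {M M₁ M₂ : Finset (V × V)}

lemma mono_support (h : IsCrossMatching G S U₁ M) (hU : U₁ ⊆ U₂) :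
    IsCrossMatching G S U₂ M :=
  { h with subset := h.subset.trans (product_subset_product hU hU) }

lemma union [DecidableEq V] (h₁ : IsCrossMatching G S U₁ M₁)
    (h₂ : IsCrossMatching G S U₂ M₂) (hU : Disjoint U₁ U₂) :
    IsCrossMatching G S (U₁ ∪ U₂) (M₁ ∪ M₂) ∧ #(M₁ ∪ M₂) = #M₁ + #M₂ := by
  have hsep : ∀ e₁ ∈ M₁, ∀ e₂ ∈ M₂, e₁.1 ≠ e₂.1 ∧ e₁.2 ≠ e₂.2 := by
    intro e₁ he₁ e₂ he₂
    have h₁ := mem_product.1 (h₁.subset he₁)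
    have h₂ := mem_product.1 (h₂.subset he₂)
    exact ⟨fun h => disjoint_left.1 hU h₁.1 (h ▸ h₂.1),
      fun h => disjoint_left.1 hU h₁.2 (h ▸ h₂.2)⟩
  have hM : Disjoint M₁ M₂ :=
    disjoint_left.2 fun e he₁ he₂ => (hsep e he₁ e he₂).1 rfl
  refine ⟨⟨?_, ?_, ?_, ?_, ?_, ?_⟩, card_union_of_disjoint hM⟩
  · exact union_subset
      (h₁.subset.trans (product_subset_product subset_union_left subset_union_left))
      (h₂.subset.trans (product_subset_product subset_union_right subset_union_right))
  · exact forall_mem_union.2 ⟨h₁.adj, h₂.adj⟩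
  · exact forall_mem_union.2 ⟨h₁.fst_mem, h₂.fst_mem⟩
  · exact forall_mem_union.2 ⟨h₁.snd_notMem, h₂.snd_notMem⟩
  · rw [coe_union, Set.injOn_union (disjoint_coe.2 hM)]
    exact ⟨h₁.injOn_fst, h₂.injOn_fst, fun _ he₁ _ he₂ => (hsep _ he₁ _ he₂).1⟩
  · rw [coe_union, Set.injOn_union (disjoint_coe.2 hM)]
    exact ⟨h₁.injOn_snd, h₂.injOn_snd, fun _ he₁ _ he₂ => (hsep _ he₁ _ he₂).2⟩

lemma hasCrossMatching (h : IsCrossMatching G S U M) {m : ℕ} (hm : m ≤ #M) :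
    HasCrossMatching G S m := by
  let e : Fin m → V × V := fun i => M.equivFin.symm (Fin.castLE hm i)
  have he : ∀ i, e i ∈ M := fun i => (M.equivFin.symm _).2
  have he_inj : Function.Injective e :=
    Subtype.val_injective.comp (M.equivFin.symm.injective.comp (Fin.castLE_injective hm))
  refine ⟨e, fun i => ⟨h.adj _ (he i), h.fst_mem _ (he i), h.snd_notMem _ (he i)⟩,
    fun i j hij => ⟨fun h' => hij ?_, fun h' => hij ?_⟩⟩
  · exact he_inj (h.injOn_fst (he i) (he j) h')
  · exact he_inj (h.injOn_snd (he i) (he j) h')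

end IsCrossMatching

lemma HasCrossMatching.le_card [Fintype V] {G : SimpleGraph V} {S : Set V} {m : ℕ}
    (h : HasCrossMatching G S m) : m ≤ Fintype.card V := by
  obtain ⟨f, -, hf⟩ := h
  simpa using Fintype.card_le_of_injective (fun i => (f i).1)
    fun i j hij => by_contra fun hne => (hf i j hne).1 hij

lemma le_matchingWidth [Fintype V] {G : SimpleGraph V} {m : ℕ}
    (h : ∀ π, ∃ t, HasCrossMatching G (prefixSet π t) m) : m ≤ matchingWidth G := by
  refine le_csInf ⟨_, (Fintype.equivFin V).symm, rfl⟩ ?_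
  rintro _ ⟨π, rfl⟩
  obtain ⟨t, ht⟩ := h π
  exact le_csSup ⟨Fintype.card V, fun n ⟨_, hn⟩ => hn.le_card⟩ ⟨t, ht⟩

end CrossMatching

lemma Finset.card_le_card_biUnion_disjSum {ι α : Type*} [DecidableEq α] {I : Finset ι}
    {t : ι → Finset α} {d : ℕ} (h : ∀ A ⊆ I, #A ≤ #(A.biUnion t) + d) (A : Finset I) :
    #A ≤ #(A.biUnion fun i => (t i).disjSum (univ : Finset (Fin d))) := by
  rcases A.eq_empty_or_nonempty with rfl | ⟨i₀, hi₀⟩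
  · simp
  set A' := A.map (Function.Embedding.subtype _)
  have hsub : (A'.biUnion t).disjSum (univ : Finset (Fin d)) ⊆
      A.biUnion fun i => (t i).disjSum univ := by
    rintro (a | j) hx
    · obtain ⟨_, hi, ha⟩ := mem_biUnion.1 (inl_mem_disjSum.1 hx)
      obtain ⟨i, hiA, rfl⟩ := mem_map.1 hi
      exact mem_biUnion.2 ⟨i, hiA, inl_mem_disjSum.2 ha⟩
    · exact mem_biUnion.2 ⟨i₀, hi₀, inr_mem_disjSum.2 (mem_univ j)⟩
  calc #A = #A' := (card_map _).symm
    _ ≤ #(A'.biUnion t) + d := h _ fun i hi => by obtain ⟨i, -, rfl⟩ := mem_map.1 hi; exact i.2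
    _ = #((A'.biUnion t).disjSum (univ : Finset (Fin d))) := by
      rw [card_disjSum, card_univ, Fintype.card_fin]
    _ ≤ _ := card_le_card hsub

lemma Fintype.card_le_card_filter_isLeft_add {ι β : Type*} [Fintype ι] {d : ℕ}
    {F : ι → β ⊕ Fin d} (hF : Function.Injective F) :
    Fintype.card ι ≤ #(univ.filter fun i => (F i).isLeft) + d := by
  have hright : #(univ.filter fun i => ¬ (F i).isLeft) ≤ d := by
    calc _ ≤ #((univ : Finset (Fin d)).map Function.Embedding.inr) := by
          refine card_le_card_of_injOn F (fun i hi => ?_) hF.injOn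
          obtain ⟨j, hj⟩ := Sum.isRight_iff.1 (by simpa using (mem_filter.1 hi).2)
          simp [hj]
      _ = d := by simp
  have := card_filter_add_card_filter_not (s := (univ : Finset ι)) fun i => (F i).isLeft
  rw [card_univ] at this
  omega

theorem Finset.exists_matching_of_card_le_card_biUnion_add {ι α : Type*} [DecidableEq α]
    (I : Finset ι) (t : ι → Finset α) (d : ℕ)
    (h : ∀ A ⊆ I, #A ≤ #(A.biUnion t) + d) :
    ∃ M : Finset (ι × α), #I ≤ #M + d ∧ (∀ p ∈ M, p.1 ∈ I ∧ p.2 ∈ t p.1) ∧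
      Set.InjOn Prod.fst (M : Set (ι × α)) ∧ Set.InjOn Prod.snd (M : Set (ι × α)) := by
  -- Hall's theorem after adding `d` dummy vertices adjacent to everything
  obtain ⟨F, hF_inj, hF⟩ := (all_card_le_biUnion_card_iff_exists_injective
    fun i : I => (t i).disjSum (univ : Finset (Fin d))).1 (card_le_card_biUnion_disjSum h)
  classical
  let M := (I ×ˢ I.biUnion t).filter fun p => ∃ hi : p.1 ∈ I, F ⟨p.1, hi⟩ = .inl p.2
  have hM : ∀ {p}, p ∈ M ↔ ∃ hi : p.1 ∈ I, F ⟨p.1, hi⟩ = .inl p.2 := by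
    intro p
    refine ⟨fun hp => (mem_filter.1 hp).2, fun ⟨hi, hp⟩ => mem_filter.2 ⟨?_, hi, hp⟩⟩
    have := hF ⟨p.1, hi⟩
    rw [hp, inl_mem_disjSum] at this
    exact mem_product.2 ⟨hi, mem_biUnion.2 ⟨p.1, hi, this⟩⟩
  refine ⟨M, ?_, fun p hp => ?_, fun p hp q hq hpq => ?_, fun p hp q hq hpq => ?_⟩
  · have hleft : #(univ.filter fun i : I => (F i).isLeft) ≤ #M := by
      calc _ ≤ #(M.image Prod.fst) := by
            refine card_le_card_of_injOn Subtype.val (fun i hi => ?_) Subtype.val_injective.injOn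
            obtain ⟨a, ha⟩ := Sum.isLeft_iff.1 (mem_filter.1 hi).2
            exact mem_image.2 ⟨(i.1, a), hM.2 ⟨i.2, ha⟩, rfl⟩
        _ ≤ #M := card_image_le
    have := Fintype.card_le_card_filter_isLeft_add hF_inj
    rw [Fintype.card_coe] at this
    omega
  · obtain ⟨hi, hp⟩ := hM.1 hp
    have := hF ⟨p.1, hi⟩
    rw [hp, inl_mem_disjSum] at this
    exact ⟨hi, this⟩
  · obtain ⟨hi, hp⟩ := hM.1 hp
    obtain ⟨hj, hq⟩ := hM.1 hq
    rw [show (⟨p.1, hi⟩ : I) = ⟨q.1, hj⟩ from Subtype.ext hpq, hq] at hp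
    exact Prod.ext hpq (Sum.inl_injective hp).symm
  · obtain ⟨hi, hp⟩ := hM.1 hp
    obtain ⟨hj, hq⟩ := hM.1 hq
    have := hF_inj (hp.trans ((congrArg Sum.inl hpq).trans hq.symm))
    exact Prod.ext (congrArg Subtype.val this) hpq

section CliqueBlowup

variable {W : Type*} (T : SimpleGraph W) (k : ℕ)

def cliqueBlowup : SimpleGraph (W × Fin k) :=
  SimpleGraph.fromRel fun a b => a.1 = b.1 ∨ T.Adj a.1 b.1

def IsCutConnected [DecidableEq W] (R : Finset W) : Prop :=
  ∀ X ⊆ R, X.Nonempty → (R \ X).Nonempty → ∃ u ∈ X, ∃ w ∈ R \ X, T.Adj u w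

variable {T k}

lemma cliqueBlowup_adj_of_fst_eq {p q : W × Fin k} (hne : p ≠ q) (h : p.1 = q.1) :
    (cliqueBlowup T k).Adj p q :=
  (SimpleGraph.fromRel_adj _ _ _).2 ⟨hne, .inl (.inl h)⟩

lemma cliqueBlowup_adj_of_adj {p q : W × Fin k} (h : T.Adj p.1 q.1) :
    (cliqueBlowup T k).Adj p q :=
  (SimpleGraph.fromRel_adj _ _ _).2 ⟨fun hpq => h.ne (congrArg Prod.fst hpq), .inl (.inr h)⟩

variable [DecidableEq W]

lemma isCutConnected_of_exists_adj_lt {R : Finset W} (h : W → ℕ) (ρ : W)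
    (hR : ∀ u ∈ R, u ≠ ρ → ∃ p ∈ R, T.Adj p u ∧ h p < h u) : IsCutConnected T R := by
  intro X hXR hX hRX
  by_cases hρX : ρ ∈ X
  · obtain ⟨u, hu, hmin⟩ := exists_min_image (R \ X) h hRX
    obtain ⟨huR, huX⟩ := mem_sdiff.1 hu
    obtain ⟨p, hpR, hpu, hlt⟩ := hR u huR fun hu => huX (hu ▸ hρX)
    have hpX : p ∈ X := by_contra fun hpX => (hmin p (mem_sdiff.2 ⟨hpR, hpX⟩)).not_gt hlt
    exact ⟨p, hpX, u, hu, hpu⟩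
  · obtain ⟨u, huX, hmin⟩ := exists_min_image X h hX
    obtain ⟨p, hpR, hpu, hlt⟩ := hR u (hXR huX) fun hu => hρX (hu ▸ huX)
    have hpX : p ∉ X := fun hpX => (hmin p hpX).not_gt hlt
    exact ⟨u, huX, p, mem_sdiff.2 ⟨hpR, hpX⟩, hpu.symm⟩

variable {R : Finset W} {S : Set (W × Fin k)} [DecidablePred (· ∈ S)]

open Classical in
lemma card_add_le_card_biUnion_add_of_adj {A : Finset (W × Fin k)}
    (hA : A ⊆ {p ∈ R ×ˢ (univ : Finset (Fin k)) | p ∈ S}) {a : W × Fin k} (haA : a ∈ A)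
    {w : W} (hwR : w ∈ R) (hwA : w ∉ A.image Prod.fst) (haw : T.Adj a.1 w) :
    #A + k ≤
      #(A.biUnion fun a => {q ∈ {p ∈ R ×ˢ univ | p ∉ S} | (cliqueBlowup T k).Adj a q}) +
        #{p ∈ R ×ˢ univ | p ∈ S} := by
  -- `A` misses the clique `B` of `w`, and every vertex of `B` outside `S` is a neighbour of `a`
  set B := ({w} : Finset W) ×ˢ (univ : Finset (Fin k))
  have hBR : B ⊆ R ×ˢ univ := product_subset_product (singleton_subset_iff.2 hwR) subset_rfl
  have hB : #{p ∈ B | p ∈ S} + #{p ∈ B | p ∉ S} = k := by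
    rw [card_filter_add_card_filter_not]
    simp [B]
  have hAB : #A + #{p ∈ B | p ∈ S} ≤ #{p ∈ R ×ˢ univ | p ∈ S} := by
    rw [← card_union_of_disjoint]
    · exact card_le_card (union_subset hA (filter_subset_filter _ hBR))
    · refine disjoint_left.2 fun p hpA hpB => hwA ?_
      rw [← (mem_singleton.1 (mem_product.1 (mem_filter.1 hpB).1).1)]
      exact mem_image_of_mem _ hpA
  have hBN : {p ∈ B | p ∉ S} ⊆
      A.biUnion fun a => {q ∈ {p ∈ R ×ˢ univ | p ∉ S} | (cliqueBlowup T k).Adj a q} := by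
    intro q hq
    obtain ⟨hqB, hqS⟩ := mem_filter.1 hq
    refine mem_biUnion.2 ⟨a, haA, mem_filter.2 ⟨mem_filter.2 ⟨hBR hqB, hqS⟩, ?_⟩⟩
    apply cliqueBlowup_adj_of_adj
    rwa [(mem_singleton.1 (mem_product.1 hqB).1)]
  have := card_le_card hBN
  omega

open Classical in
lemma card_add_le_card_biUnion_add (hR : IsCutConnected T R)
    (hin : k ≤ #{p ∈ R ×ˢ univ | p ∈ S}) (hout : k ≤ #{p ∈ R ×ˢ univ | p ∉ S})
    {A : Finset (W × Fin k)} (hA : A ⊆ {p ∈ R ×ˢ (univ : Finset (Fin k)) | p ∈ S}) :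
    #A + k ≤
      #(A.biUnion fun a => {q ∈ {p ∈ R ×ˢ univ | p ∉ S} | (cliqueBlowup T k).Adj a q}) +
        #{p ∈ R ×ˢ univ | p ∈ S} := by
  rcases A.eq_empty_or_nonempty with rfl | hA₀
  · rw [card_empty, zero_add]
    exact hin.trans (Nat.le_add_left _ _)
  have hXR : A.image Prod.fst ⊆ R :=
    image_subset_iff.2 fun a ha => (mem_product.1 (mem_filter.1 (hA ha)).1).1
  by_cases hRX : (R \ A.image Prod.fst).Nonempty
  · obtain ⟨_, hu, w, hw, huw⟩ := hR _ hXR (hA₀.image _) hRX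
    obtain ⟨a, haA, rfl⟩ := mem_image.1 hu
    exact card_add_le_card_biUnion_add_of_adj hA haA (mem_sdiff.1 hw).1 (mem_sdiff.1 hw).2 huw
  · -- every clique of `R` contains a vertex of `A`, so `A` sees every vertex outside `S`
    have hON : {p ∈ R ×ˢ (univ : Finset (Fin k)) | p ∉ S} ⊆
        A.biUnion fun a => {q ∈ {p ∈ R ×ˢ univ | p ∉ S} | (cliqueBlowup T k).Adj a q} := by
      intro q hq
      obtain ⟨hqR, hqS⟩ := mem_filter.1 hq
      have hqX : q.1 ∈ A.image Prod.fst :=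
        by_contra fun hqX => hRX ⟨q.1, mem_sdiff.2 ⟨(mem_product.1 hqR).1, hqX⟩⟩
      obtain ⟨a, haA, haq⟩ := mem_image.1 hqX
      refine mem_biUnion.2 ⟨a, haA, mem_filter.2 ⟨hq, cliqueBlowup_adj_of_fst_eq ?_ haq⟩⟩
      rintro rfl
      exact hqS (mem_filter.1 (hA haA)).2
    have := card_le_card hON
    have := card_le_card hA
    omega

theorem exists_isCrossMatching_of_isCutConnected (hR : IsCutConnected T R)
    (hin : k ≤ #{p ∈ R ×ˢ univ | p ∈ S}) (hout : k ≤ #{p ∈ R ×ˢ univ | p ∉ S}) :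
    ∃ M, IsCrossMatching (cliqueBlowup T k) S (R ×ˢ univ) M ∧ k ≤ #M := by
  classical
  obtain ⟨M, hcard, hM, hfst, hsnd⟩ := exists_matching_of_card_le_card_biUnion_add
    {p ∈ R ×ˢ univ | p ∈ S}
    (fun a => {q ∈ {p ∈ R ×ˢ univ | p ∉ S} | (cliqueBlowup T k).Adj a q})
    (#{p ∈ R ×ˢ univ | p ∈ S} - k)
    fun A hA => by have := card_add_le_card_biUnion_add hR hin hout hA; omega
  have hM' : ∀ e ∈ M, (e.1 ∈ R ×ˢ univ ∧ e.1 ∈ S) ∧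
      (e.2 ∈ R ×ˢ univ ∧ e.2 ∉ S) ∧ (cliqueBlowup T k).Adj e.1 e.2 := by
    intro e he
    obtain ⟨h₁, h₂⟩ := hM e he
    simp only [mem_filter] at h₁ h₂
    exact ⟨h₁, h₂.1, h₂.2⟩
  refine ⟨M, ⟨fun e he => ?_, fun e he => (hM' e he).2.2, fun e he => (hM' e he).1.2,
    fun e he => (hM' e he).2.1.2, hfst, hsnd⟩, by omega⟩
  exact mem_product.2 ⟨(hM' e he).1.1, (hM' e he).2.1.1⟩

end CliqueBlowup

theorem Nat.exists_eq_of_map_succ_le_add_one {f : ℕ → ℕ} (hf : ∀ n, f (n + 1) ≤ f n + 1)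
    {c d m : ℕ} (hcd : c ≤ d) (hc : f c ≤ m) (hd : m ≤ f d) :
    ∃ a, c ≤ a ∧ a ≤ d ∧ f a = m := by
  induction d, hcd using Nat.le_induction with
  | base => exact ⟨c, le_rfl, le_rfl, le_antisymm hc hd⟩
  | succ d hcd ih =>
    by_cases h : m ≤ f d
    · obtain ⟨a, hca, had, ha⟩ := ih h
      exact ⟨a, hca, had.trans d.le_succ, ha⟩
    · exact ⟨d + 1, hcd.trans d.le_succ, le_rfl, by have := hf d; omega⟩

theorem exists_not_and_not_of_subsingleton {ι : Type*} [Fintype ι] (hι : 3 ≤ Fintype.card ι)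
    {P Q : ι → Prop} (hP : {i | P i}.Subsingleton) (hQ : {i | Q i}.Subsingleton) :
    ∃ i, ¬P i ∧ ¬Q i := by
  classical
  by_contra! h
  have hcover : (univ : Finset ι) ⊆ univ.filter P ∪ univ.filter Q := fun i _ => by
    by_cases hi : P i <;> simp [hi, h i]
  have hcard : ∀ R : ι → Prop, {i | R i}.Subsingleton → #(univ.filter R) ≤ 1 :=
    fun R hR => card_le_one.2 fun i hi j hj => hR (mem_filter.1 hi).2 (mem_filter.1 hj).2
  have := (card_le_card hcover).trans (card_union_le _ _)
  have := hcard P hP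
  have := hcard Q hQ
  rw [card_univ] at *
  omega

section Counting

variable {V : Type*} [Fintype V] (π : Fin (Fintype.card V) ≃ V)

instance decidableMemPrefixSet (t : ℕ) (v : V) : Decidable (v ∈ prefixSet π t) :=
  inferInstanceAs (Decidable ((π.symm v : ℕ) < t))

def numBefore (U : Finset V) (t : ℕ) : ℕ := #{v ∈ U | v ∈ prefixSet π t}

def numAfter (U : Finset V) (t : ℕ) : ℕ := #{v ∈ U | v ∉ prefixSet π t}

variable {π} {U U' : Finset V} {t t' : ℕ}

@[simp] lemma mem_prefixSet {v : V} : v ∈ prefixSet π t ↔ (π.symm v : ℕ) < t := Iff.rfl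

lemma numBefore_add_numAfter (U : Finset V) (t : ℕ) :
    numBefore π U t + numAfter π U t = #U :=
  card_filter_add_card_filter_not _

lemma numBefore_le_of_subset (h : U ⊆ U') (t : ℕ) : numBefore π U t ≤ numBefore π U' t :=
  card_le_card (filter_subset_filter _ h)

lemma numAfter_le_of_subset (h : U ⊆ U') (t : ℕ) : numAfter π U t ≤ numAfter π U' t :=
  card_le_card (filter_subset_filter _ h)

lemma numBefore_le_of_le (U : Finset V) (h : t ≤ t') : numBefore π U t ≤ numBefore π U t' :=
  card_le_card fun v hv => by
    simp only [mem_filter, mem_prefixSet] at hv ⊢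
    exact ⟨hv.1, by omega⟩

lemma numAfter_le_of_le (U : Finset V) (h : t ≤ t') : numAfter π U t' ≤ numAfter π U t :=
  card_le_card fun v hv => by
    simp only [mem_filter, mem_prefixSet] at hv ⊢
    exact ⟨hv.1, by omega⟩

lemma numBefore_zero (U : Finset V) : numBefore π U 0 = 0 :=
  card_eq_zero.2 (filter_eq_empty_iff.2 fun _ _ hv => Nat.not_lt_zero _ hv)

lemma numAfter_card (U : Finset V) : numAfter π U (Fintype.card V) = 0 :=
  card_eq_zero.2 (filter_eq_empty_iff.2 fun v _ hv => hv (π.symm v).isLt)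

lemma numBefore_succ_le (U : Finset V) (t : ℕ) :
    numBefore π U (t + 1) ≤ numBefore π U t + 1 := by
  classical
  have hsub : {v ∈ U | v ∈ prefixSet π (t + 1)} ⊆
      {v ∈ U | v ∈ prefixSet π t} ∪ {v ∈ U | (π.symm v : ℕ) = t} := by
    intro v hv
    simp only [mem_union, mem_filter, mem_prefixSet] at hv ⊢
    rcases Nat.lt_succ_iff_lt_or_eq.1 hv.2 with h | h
    · exact .inl ⟨hv.1, h⟩
    · exact .inr ⟨hv.1, h⟩
  have hone : #{v ∈ U | (π.symm v : ℕ) = t} ≤ 1 := card_le_one.2 fun v hv w hw =>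
    π.symm.injective (Fin.ext ((mem_filter.1 hv).2.trans (mem_filter.1 hw).2.symm))
  exact (card_le_card hsub).trans ((card_union_le _ _).trans (Nat.add_le_add_left hone _))

lemma exists_numBefore_eq_and_numAfter_eq {k c d : ℕ} (hU : 2 * k ≤ #U) (hcd : c ≤ d)
    (hc : numBefore π U c ≤ k) (hd : numAfter π U d ≤ k) :
    ∃ a b, c ≤ a ∧ a ≤ b ∧ b ≤ d ∧ numBefore π U a = k ∧ numAfter π U b = k := by
  have hsum := numBefore_add_numAfter (π := π) U
  have hstep := numBefore_succ_le (π := π) U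
  obtain ⟨a, hca, had, ha⟩ := Nat.exists_eq_of_map_succ_le_add_one hstep hcd hc
    (by have := hsum d; omega)
  obtain ⟨b, hab, hbd, hb⟩ := Nat.exists_eq_of_map_succ_le_add_one hstep had
    (m := #U - k) (by omega) (by have := hsum d; omega)
  exact ⟨a, b, hca, hab, hbd, ha, by have := hsum b; omega⟩

lemma exists_forall_le_numBefore_and_numAfter {ι : Type*} [Fintype ι]
    (hι : 3 ≤ Fintype.card ι) {U C : ι → Finset V} (hUC : ∀ i j, i ≠ j → U i ⊆ C j)
    {a b : ι → ℕ} {k : ℕ} (ha : ∀ i, k ≤ numBefore π (U i) (a i))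
    (hb : ∀ i, k ≤ numAfter π (U i) (b i)) :
    ∃ i, (∀ t, a i ≤ t → k ≤ numBefore π (C i) t) ∧
      (∀ t, t ≤ b i → k ≤ numAfter π (C i) t) := by
  -- once `U i` has `k` vertices before time `t`, so has `C j` for every `j ≠ i`
  have hbefore : ∀ i j t, i ≠ j → a i ≤ t → k ≤ numBefore π (C j) t :=
    fun i j t hij ht =>
      (ha i).trans ((numBefore_le_of_le _ ht).trans (numBefore_le_of_subset (hUC i j hij) t))
  have hafter : ∀ i j t, i ≠ j → t ≤ b i → k ≤ numAfter π (C j) t :=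
    fun i j t hij ht =>
      (hb i).trans ((numAfter_le_of_le _ ht).trans (numAfter_le_of_subset (hUC i j hij) t))
  obtain ⟨i, hP, hQ⟩ := exists_not_and_not_of_subsingleton hι
    (P := fun i => ∃ t, a i ≤ t ∧ numBefore π (C i) t < k)
    (Q := fun i => ∃ t, t ≤ b i ∧ numAfter π (C i) t < k)
    (by
      rintro i ⟨t, hat, ht⟩ j ⟨s, has, hs⟩
      by_contra hij
      rcases le_total t s with hts | hst
      · exact hs.not_ge (hbefore i j s hij (hat.trans hts))
      · exact ht.not_ge (hbefore j i t (Ne.symm hij) (has.trans hst)))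
    (by
      rintro i ⟨t, hbt, ht⟩ j ⟨s, hbs, hs⟩
      by_contra hij
      rcases le_total t s with hts | hst
      · exact ht.not_ge (hafter j i t (Ne.symm hij) (hts.trans hbs))
      · exact hs.not_ge (hafter i j s hij (hst.trans hbt)))
  simp only [not_exists, not_and, not_lt] at hP hQ
  exact ⟨i, hP, hQ⟩

end Counting

namespace BTNode

variable {r : ℕ}

def level (u : BTNode r) : ℕ := u.1

def index (u : BTNode r) : ℕ := u.2

def mk' (i j : ℕ) (hi : i ≤ r) (hj : j < 2 ^ i) : BTNode r :=
  ⟨⟨i, Nat.lt_succ_of_le hi⟩, ⟨j, hj⟩⟩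

@[simp] lemma level_mk' {i j : ℕ} (hi : i ≤ r) (hj : j < 2 ^ i) :
    (mk' i j hi hj).level = i := rfl

@[simp] lemma index_mk' {i j : ℕ} (hi : i ≤ r) (hj : j < 2 ^ i) :
    (mk' i j hi hj).index = j := rfl

lemma level_le (u : BTNode r) : u.level ≤ r := Nat.le_of_lt_succ u.1.isLt

lemma index_lt (u : BTNode r) : u.index < 2 ^ u.level := u.2.isLt

lemma ext_level_index {u v : BTNode r} (hl : u.level = v.level) (hi : u.index = v.index) :
    u = v := by
  obtain ⟨⟨i, _⟩, ⟨j, _⟩⟩ := u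
  obtain ⟨⟨i', _⟩, ⟨j', _⟩⟩ := v
  simp only [level, index] at hl hi
  subst hl hi
  rfl

lemma two_pow_mul_add_lt (u : BTNode r) {n m : ℕ} (hm : m < 2 ^ n) :
    2 ^ n * u.index + m < 2 ^ (u.level + n) := by
  have := Nat.mul_le_mul_left (2 ^ n) (Nat.succ_le_of_lt u.index_lt)
  rw [pow_add]
  linarith

def descendants (v : BTNode r) : Finset (BTNode r) :=
  univ.filter fun u => v.level ≤ u.level ∧ u.index / 2 ^ (u.level - v.level) = v.index

lemma mem_descendants {u v : BTNode r} :
    u ∈ v.descendants ↔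
      v.level ≤ u.level ∧ u.index / 2 ^ (u.level - v.level) = v.index := by
  simp [descendants]

lemma self_mem_descendants (v : BTNode r) : v ∈ v.descendants := by
  simp [mem_descendants]

lemma index_div_two_pow_div_two_pow (u : BTNode r) {a b : ℕ} :
    u.index / 2 ^ a / 2 ^ b = u.index / 2 ^ (a + b) := by
  rw [Nat.div_div_eq_div_mul, pow_add]

lemma descendants_subset {w v : BTNode r} (h : w ∈ v.descendants) :
    w.descendants ⊆ v.descendants := by
  intro u hu
  rw [mem_descendants] at *
  refine ⟨h.1.trans hu.1, ?_⟩
  rw [← h.2, ← hu.2, index_div_two_pow_div_two_pow]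
  congr 2
  omega

lemma mem_descendants_of_level_le {u p v : BTNode r} (hp : u ∈ p.descendants)
    (hv : u ∈ v.descendants) (hl : v.level ≤ p.level) : p ∈ v.descendants := by
  rw [mem_descendants] at *
  refine ⟨hl, ?_⟩
  rw [← hp.2, ← hv.2, index_div_two_pow_div_two_pow]
  congr 2
  omega

lemma eq_of_mem_descendants_of_mem_descendants {u v w : BTNode r} (hv : u ∈ v.descendants)
    (hw : u ∈ w.descendants) (hl : v.level = w.level) : v = w := by
  rw [mem_descendants] at hv hw
  exact ext_level_index hl (by rw [← hv.2, ← hw.2, hl])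

lemma level_lt_of_mem_descendants {u v : BTNode r} (h : u ∈ v.descendants) (hne : u ≠ v) :
    v.level < u.level :=
  (mem_descendants.1 h).1.lt_of_ne fun hl =>
    hne (eq_of_mem_descendants_of_mem_descendants (self_mem_descendants u) h hl.symm)

lemma mk'_mem_descendants (v : BTNode r) {n m : ℕ} (hm : m < 2 ^ n) (hn : v.level + n ≤ r) :
    mk' (v.level + n) (2 ^ n * v.index + m) hn (v.two_pow_mul_add_lt hm) ∈ v.descendants := by
  rw [mem_descendants, level_mk', index_mk', Nat.add_sub_cancel_left,
    Nat.mul_add_div (Nat.two_pow_pos n), Nat.div_eq_of_lt hm, add_zero]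
  exact ⟨Nat.le_add_right _ _, rfl⟩

lemma exists_grandchildren (v : BTNode r) (h : v.level + 2 ≤ r) :
    ∃ g : Fin 4 → BTNode r, (∀ m, g m ∈ v.descendants ∧ (g m).level = v.level + 2) ∧
      Pairwise fun i j => Disjoint (g i).descendants (g j).descendants := by
  refine ⟨fun m => mk' _ _ h (v.two_pow_mul_add_lt (n := 2) m.isLt),
    fun m => ⟨v.mk'_mem_descendants m.isLt h, rfl⟩,
    fun i j hij => disjoint_left.2 fun u hi hj => hij (Fin.ext ?_)⟩
  have := eq_of_mem_descendants_of_mem_descendants hi hj rfl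
  simpa using congrArg index this

lemma two_le_card_descendants {v : BTNode r} (h : v.level < r) : 2 ≤ #v.descendants := by
  have hc := v.mk'_mem_descendants (n := 1) (m := 0) (by norm_num) h
  refine one_lt_card.2 ⟨v, v.self_mem_descendants, _, hc, fun he => ?_⟩
  have := congrArg level he
  simp at this

lemma exists_parent {u : BTNode r} (h : 0 < u.level) :
    ∃ p, (btreeGraph r).Adj p u ∧ p.level + 1 = u.level ∧ u ∈ p.descendants := by
  have hlt : u.index / 2 < 2 ^ (u.level - 1) := by
    have h2 : 2 ^ u.level = 2 * 2 ^ (u.level - 1) := by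
      rw [← pow_succ']
      congr 1
      omega
    exact Nat.div_lt_of_lt_mul (h2 ▸ u.index_lt)
  refine ⟨mk' (u.level - 1) (u.index / 2) (by have := u.level_le; omega) hlt, ?_, ?_, ?_⟩
  · refine (SimpleGraph.fromRel_adj _ _ _).2 ⟨fun he => ?_, .inl ⟨?_, rfl⟩⟩
    · have := congrArg level he
      simp only [level_mk'] at this
      omega
    · change u.level - 1 + 1 = u.level
      omega
  · simp only [level_mk']
    omega
  · rw [mem_descendants, level_mk', index_mk', Nat.sub_sub_self h, pow_one]
    exact ⟨Nat.sub_le _ _, rfl⟩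

lemma isCutConnected_descendants (v : BTNode r) :
    IsCutConnected (btreeGraph r) v.descendants := by
  refine isCutConnected_of_exists_adj_lt level v fun u hu hne => ?_
  have hlt := level_lt_of_mem_descendants hu hne
  obtain ⟨p, hpu, hp, hup⟩ := exists_parent (Nat.zero_lt_of_lt hlt)
  exact ⟨p, mem_descendants_of_level_le hup hu (by omega), hpu, by omega⟩

lemma isCutConnected_descendants_sdiff (v g : BTNode r) :
    IsCutConnected (btreeGraph r) (v.descendants \ g.descendants) := by
  refine isCutConnected_of_exists_adj_lt level v fun u hu hne => ?_
  obtain ⟨hu, hug⟩ := mem_sdiff.1 hu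
  have hlt := level_lt_of_mem_descendants hu hne
  obtain ⟨p, hpu, hp, hup⟩ := exists_parent (Nat.zero_lt_of_lt hlt)
  refine ⟨p, mem_sdiff.2 ⟨?_, fun hpg => hug (descendants_subset hpg hup)⟩, hpu, by omega⟩
  exact mem_descendants_of_level_le hup hu (by omega)

end BTNode

section Recursion

open BTNode

variable {r k : ℕ} (π : Fin (Fintype.card (BTNode r × Fin k)) ≃ BTNode r × Fin k)

lemma cliqueTree_eq_cliqueBlowup : cliqueTree r k = cliqueBlowup (btreeGraph r) k := rfl

lemma two_mul_le_card_descendants_product {v : BTNode r} (h : v.level < r) :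
    2 * k ≤ #(v.descendants ×ˢ (univ : Finset (Fin k))) := by
  rw [card_product, card_univ, Fintype.card_fin]
  exact Nat.mul_le_mul_right k (two_le_card_descendants h)

theorem exists_isCrossMatching_descendants (s : ℕ) (v : BTNode r)
    (hv : v.level + (2 * s + 1) = r) {c d : ℕ} (hcd : c ≤ d)
    (hc : numBefore π (v.descendants ×ˢ univ) c ≤ k)
    (hd : numAfter π (v.descendants ×ˢ univ) d ≤ k) :
    ∃ t, c ≤ t ∧ t ≤ d ∧ ∃ M, IsCrossMatching (cliqueTree r k) (prefixSet π t)
      (v.descendants ×ˢ univ) M ∧ (s + 1) * k ≤ #M := by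
  rw [cliqueTree_eq_cliqueBlowup]
  induction s generalizing v c d with
  | zero =>
    have hcard := two_mul_le_card_descendants_product (k := k) (v := v) (by omega)
    obtain ⟨a, b, hca, hab, hbd, ha, -⟩ :=
      exists_numBefore_eq_and_numAfter_eq hcard hcd hc hd
    have := numBefore_add_numAfter (π := π) (v.descendants ×ˢ univ) a
    obtain ⟨M, hM, hMk⟩ := exists_isCrossMatching_of_isCutConnected
      (isCutConnected_descendants v) ha.ge (show k ≤ numAfter π _ a by omega)
    exact ⟨a, hca, hab.trans hbd, M, hM, by simpa using hMk⟩
  | succ s ih =>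
    obtain ⟨g, hg, hdisj⟩ := exists_grandchildren v (by omega)
    have hgsub : ∀ m,
        (g m).descendants ×ˢ univ ⊆ v.descendants ×ˢ (univ : Finset (Fin k)) :=
      fun m => product_subset_product (descendants_subset (hg m).1) subset_rfl
    have hUC : ∀ i j, i ≠ j → (g i).descendants ×ˢ univ ⊆
        (v.descendants \ (g j).descendants) ×ˢ (univ : Finset (Fin k)) := fun i j hij =>
      product_subset_product
        (subset_sdiff.2 ⟨descendants_subset (hg i).1, hdisj hij⟩) subset_rfl
    choose a b hca hab hbd ha hb using fun m =>
      exists_numBefore_eq_and_numAfter_eq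
        (two_mul_le_card_descendants_product (by have := (hg m).2; omega)) hcd
        ((numBefore_le_of_subset (hgsub m) c).trans hc)
        ((numAfter_le_of_subset (hgsub m) d).trans hd)
    obtain ⟨m, hbefore, hafter⟩ := exists_forall_le_numBefore_and_numAfter (by simp) hUC
      (fun i => (ha i).ge) (fun i => (hb i).ge)
    obtain ⟨t, hat, htb, M₁, hM₁, hM₁k⟩ :=
      ih (g m) (by have := (hg m).2; omega) (hab m) (ha m).le (hb m).le
    obtain ⟨M₂, hM₂, hM₂k⟩ := exists_isCrossMatching_of_isCutConnected
      (isCutConnected_descendants_sdiff v (g m)) (hbefore t hat) (hafter t htb)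
    obtain ⟨hM, hcard⟩ := hM₁.union hM₂ (disjoint_product.2 (.inl disjoint_sdiff))
    refine ⟨t, (hca m).trans hat, htb.trans (hbd m), M₁ ∪ M₂, hM.mono_support ?_, ?_⟩
    · exact union_subset (hgsub m) (product_subset_product sdiff_subset subset_rfl)
    · rw [hcard]
      linarith

end Recursion

theorem stmt7_general (r k : ℕ) (hodd : Odd r) :
    (r + 1) * k ≤ 2 * matchingWidth (cliqueTree r k) := by
  obtain ⟨s, rfl⟩ := hodd
  let root : BTNode (2 * s + 1) := BTNode.mk' 0 0 (Nat.zero_le _) (Nat.two_pow_pos 0)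
  suffices (s + 1) * k ≤ matchingWidth (cliqueTree (2 * s + 1) k) by linarith
  refine le_matchingWidth fun π => ?_
  obtain ⟨t, -, -, M, hM, hMk⟩ := exists_isCrossMatching_descendants π s root (zero_add _)
    (Nat.zero_le _) (by rw [numBefore_zero]; exact Nat.zero_le _)
    (by rw [numAfter_card]; exact Nat.zero_le _)
  exact ⟨t, hM.hasCrossMatching hMk⟩

/-- for odd r ≥ 1, the matching width of CT_{r,k} is at least
(r+1)k/2 (stated multiplied by 2 to avoid division). -/
theorem stmt7 (r k : ℕ) (hk : 1 ≤ k) (hr : 1 ≤ r) (hodd : Odd r) :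
    (r + 1) * k ≤ 2 * matchingWidth (cliqueTree r k) :=
  stmt7_general r k hodd
end

section
/- Let G be a graph with matching width t, and let F = CNF(G). Then every permutation π of Var(F) has a prefix π_1 such that the number of distinct subfunctions F_S, over assignments S to the variables of π_1, is at least 2^t. -/
/-- An OBDD over `n` Boolean variables, whose global variable order is the order
of the indices `Fin n`.  Nodes are `Fin size`; a node labelled `Sum.inr b` is a
sink with value `b`; a node labelled `Sum.inl i` reads variable `i` and branches
to `lo`/`hi`.  Along every edge the variable index strictly increases, so along
every root-to-sink path the variables appear according to the fixed order. -/
structure OBDD (n : ℕ) where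
  size : ℕ
  root : Fin size
  label : Fin size → Fin n ⊕ Bool
  lo : Fin size → Fin size
  hi : Fin size → Fin size
  increasing : ∀ u (i : Fin n), label u = Sum.inl i →
    (∀ j : Fin n, label (lo u) = Sum.inl j → i < j) ∧
    (∀ j : Fin n, label (hi u) = Sum.inl j → i < j)

def OBDD.evalAux {n : ℕ} (D : OBDD n) : ℕ → Fin D.size → (Fin n → Bool) → Bool
  | 0, _, _ => false
  | fuel + 1, u, x =>
    match D.label u with
    | Sum.inr b => b
    | Sum.inl i => D.evalAux fuel (if x i then D.hi u else D.lo u) x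

/-- The Boolean function computed by an OBDD (by `increasing`, a sink is always
reached within `n + 1` steps). -/
def OBDD.eval {n : ℕ} (D : OBDD n) (x : Fin n → Bool) : Bool :=
  D.evalAux (n + 1) D.root x

/-- `D` computes the Boolean function `F` on variable set `V`, where the
bijection `π` lists the variables in the order used by `D`. -/
def OBDD.Computes {n : ℕ} {V : Type*} (D : OBDD n) (F : (V → Bool) → Bool)
    (π : Fin n ≃ V) : Prop :=
  ∀ x : V → Bool, D.eval (fun i => x (π i)) = F x

/-- The subfunction of `F` obtained by fixing the first `t` variables (in the
order `π`) according to `a`. -/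
def subfun {n : ℕ} {V : Type*} (F : (V → Bool) → Bool) (π : Fin n ≃ V)
    (t : ℕ) (a : Fin n → Bool) : (V → Bool) → Bool :=
  fun y => F (fun v => if ((π.symm v : Fin n) : ℕ) < t then a (π.symm v) else y v)

/-- Variables of `CNF(G)`: one variable `X_u` per vertex `u` and one variable
`X_{u,v}` per edge `{u,v}` of `G`. -/
abbrev CnfVar {V : Type*} (G : SimpleGraph V) := V ⊕ {e // e ∈ G.edgeSet}

/-- The Boolean function of `CNF(G)`: the conjunction over all edges `{u,v}` of
`G` of the clauses `(X_u ∨ X_{u,v} ∨ X_v)`. -/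
noncomputable def cnfFun {V : Type*} (G : SimpleGraph V) : (CnfVar G → Bool) → Bool :=
  fun x => @decide
    (∀ e : {e // e ∈ G.edgeSet},
      x (Sum.inr e) = true ∨ ∃ u, u ∈ e.val ∧ x (Sum.inl u) = true)
    (Classical.propDecidable _)

/-! Order the vertices by the positions of their variables in `π`. Some prefix of that order is
crossed by a matching `(uᵢ, vᵢ)ᵢ` of size `t`, and it is cut out by a prefix of `π` that contains
every `X_{uᵢ}` and no `X_{vᵢ}`. The `2^t` prefix assignments `X_{uᵢ} := bᵢ` (matching edges
`false`, all other variables `true`) give pairwise distinct subfunctions: completed by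
`X_{vᵢ} = X_{uᵢ,vᵢ} = false` and `true` elsewhere, `CNF(G)` evaluates to `bᵢ`. -/

theorem injective_fst_of_forall_ne {ι α β : Type*} {f : ι → α × β}
    (hd : ∀ i j, i ≠ j → (f i).1 ≠ (f j).1 ∧ (f i).2 ≠ (f j).2) :
    Function.Injective fun i => (f i).1 :=
  fun i j hij => by_contra fun hne => (hd i j hne).1 hij

namespace HasCrossMatching

variable {V : Type*} {G : SimpleGraph V} {S : Set V} {m : ℕ}

theorem of_le (h : HasCrossMatching G S m) {k : ℕ} (hk : k ≤ m) : HasCrossMatching G S k := by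
  obtain ⟨f, hf, hd⟩ := h
  exact ⟨f ∘ Fin.castLE hk, fun i => hf _,
    fun i j hij => hd _ _ ((Fin.castLE_injective hk).ne hij)⟩

theorem le_card_s13 [Fintype V] (h : HasCrossMatching G S m) : m ≤ Fintype.card V := by
  obtain ⟨f, -, hd⟩ := h
  simpa using Fintype.card_le_of_injective _ (injective_fst_of_forall_ne hd)

end HasCrossMatching

theorem exists_hasCrossMatching_orderMW {V : Type*} [Fintype V] (G : SimpleGraph V)
    (σ : Fin (Fintype.card V) ≃ V) : ∃ k, HasCrossMatching G (prefixSet σ k) (orderMW G σ) :=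
  Nat.sSup_mem (s := {m | ∃ k, HasCrossMatching G (prefixSet σ k) m})
    ⟨0, 0, Fin.elim0, fun i => i.elim0, fun i => i.elim0⟩
    ⟨Fintype.card V, fun _ ⟨_, h⟩ => h.le_card_s13⟩

theorem exists_hasCrossMatching_matchingWidth {V : Type*} [Fintype V] (G : SimpleGraph V)
    (σ : Fin (Fintype.card V) ≃ V) :
    ∃ k, HasCrossMatching G (prefixSet σ k) (matchingWidth G) := by
  obtain ⟨k, hk⟩ := exists_hasCrossMatching_orderMW G σ
  exact ⟨k, hk.of_le (Nat.sInf_le ⟨σ, rfl⟩)⟩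

theorem exists_prefixSet_eq_lt_of_injective {V : Type*} [Fintype V] (p : V → ℕ)
    (hp : Function.Injective p) :
    ∃ σ : Fin (Fintype.card V) ≃ V, ∀ k, ∃ s, prefixSet σ k = {u | p u < s} := by
  let : LinearOrder V := LinearOrder.lift' p hp
  let σ : Fin (Fintype.card V) ≃o V := monoEquivOfFin V rfl
  refine ⟨σ.toEquiv, fun k => ?_⟩
  by_cases hk : k < Fintype.card V
  · refine ⟨p (σ ⟨k, hk⟩), Set.ext fun u => ?_⟩
    change σ.symm u < ⟨k, hk⟩ ↔ u < σ ⟨k, hk⟩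
    exact σ.symm_apply_lt
  · obtain ⟨M, hM⟩ := (Set.finite_range p).bddAbove
    refine ⟨M + 1, Set.ext fun u => ?_⟩
    have hu : p u < M + 1 := Nat.lt_succ_of_le (hM ⟨u, rfl⟩)
    have hu' : ((σ.symm u : Fin _) : ℕ) < k := (σ.symm u).isLt.trans_le (not_lt.mp hk)
    exact iff_of_true hu' hu

theorem two_pow_le_ncard_subfun {n m : ℕ} {W : Type*} (F : (W → Bool) → Bool) (π : Fin n ≃ W)
    (s : ℕ) (a : (Fin m → Bool) → Fin n → Bool) (y : Fin m → W → Bool)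
    (h : ∀ b i, subfun F π s (a b) (y i) = b i) :
    2 ^ m ≤ {g : (W → Bool) → Bool | ∃ a : Fin n → Bool, g = subfun F π s a}.ncard := by
  set A := {g : (W → Bool) → Bool | ∃ a : Fin n → Bool, g = subfun F π s a}
  have hA : A = Set.range (subfun F π s) := Set.ext fun g => exists_congr fun _ => eq_comm
  have : Finite A := hA ▸ Set.finite_range _
  have hinj : Function.Injective fun b : Fin m → Bool => (⟨subfun F π s (a b), a b, rfl⟩ : A) :=
    fun b b' hbb' => funext fun i => by
      rw [← h b i, ← h b' i, show subfun F π s (a b) = subfun F π s (a b') from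
        congrArg Subtype.val hbb']
  simpa [Nat.card_coe_set_eq] using Nat.card_le_card_of_injective _ hinj

section CnfFooling

variable {V : Type*} (G : SimpleGraph V) {m : ℕ}

theorem cnfFun_eq_true_iff (x : CnfVar G → Bool) :
    cnfFun G x = true ↔ ∀ e : {e // e ∈ G.edgeSet},
      x (Sum.inr e) = true ∨ ∃ u, u ∈ e.val ∧ x (Sum.inl u) = true := by
  simp [cnfFun]

open Classical in
noncomputable def crossAssignment (f : Fin m → V × V) (b : Fin m → Bool) : CnfVar G → Bool :=
  Sum.elim (Function.extend (fun i => (f i).1) b fun _ => true)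
    fun e => decide (∀ j, e.val ≠ s((f j).1, (f j).2))

open Classical in
noncomputable def crossWitness (f : Fin m → V × V) (i : Fin m) : CnfVar G → Bool :=
  Sum.elim (fun u => decide (u ≠ (f i).2)) fun e => decide (e.val ≠ s((f i).1, (f i).2))

theorem cnfFun_ite_crossAssignment_crossWitness (q : CnfVar G → Prop) [DecidablePred q]
    (f : Fin m → V × V) (hadj : ∀ j, G.Adj (f j).1 (f j).2)
    (hin : ∀ j, q (Sum.inl (f j).1)) (hout : ∀ j, ¬ q (Sum.inl (f j).2))
    (hd : ∀ j k : Fin m, j ≠ k → (f j).1 ≠ (f k).1 ∧ (f j).2 ≠ (f k).2)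
    (b : Fin m → Bool) (i : Fin m) :
    cnfFun G (fun v => if q v then crossAssignment G f b v else crossWitness G f i v) = b i := by
  classical
  set z := fun v => if q v then crossAssignment G f b v else crossWitness G f i v
  have hleft : ∀ j, z (Sum.inl (f j).1) = b j := fun j => by
    simp [z, hin j, crossAssignment, (injective_fst_of_forall_ne hd).extend_apply]
  have hright : ∀ j, z (Sum.inl (f j).2) = decide (j ≠ i) := fun j => by
    by_cases hji : j = i
    · simp [z, hout, crossWitness, hji]
    · simp [z, hout, crossWitness, hji, (hd j i hji).2]
  have hedge_i : z (Sum.inr ⟨s((f i).1, (f i).2), hadj i⟩) = false := by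
    by_cases hq : q (Sum.inr ⟨s((f i).1, (f i).2), hadj i⟩)
    · simp only [z, hq, if_true, crossAssignment, Sum.elim_inr, decide_eq_false_iff_not, not_forall,
        not_not]
      exact ⟨i, rfl⟩
    · simp [z, hq, crossWitness]
  have hedge : ∀ e : {e // e ∈ G.edgeSet}, (∀ j, e.val ≠ s((f j).1, (f j).2)) →
      z (Sum.inr e) = true := fun e he => by
    by_cases hq : q (Sum.inr e)
    · simp [z, hq, crossAssignment, he]
    · simp [z, hq, crossWitness, he i]
  cases hbi : b i with
  | false =>
    rw [Bool.eq_false_iff, ne_eq, cnfFun_eq_true_iff]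
    intro hsat
    rcases hsat ⟨s((f i).1, (f i).2), hadj i⟩ with hc | ⟨u, hu, hcu⟩
    · exact Bool.false_ne_true (hedge_i.symm.trans hc)
    · rcases Sym2.mem_iff.mp hu with rfl | rfl
      · simp [hleft, hbi] at hcu
      · simp [hright] at hcu
  | true =>
    refine (cnfFun_eq_true_iff G z).mpr fun e => ?_
    by_cases hmatch : ∃ j, e.val = s((f j).1, (f j).2)
    · obtain ⟨j, hj⟩ := hmatch
      right
      by_cases hji : j = i
      · exact ⟨(f j).1, hj ▸ Sym2.mem_mk_left _ _, by rw [hleft, hji, hbi]⟩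
      · exact ⟨(f j).2, hj ▸ Sym2.mem_mk_right _ _, by simp [hright, hji]⟩
    · exact Or.inl (hedge e (not_exists.mp hmatch))

end CnfFooling

theorem two_pow_le_ncard_subfun_cnfFun {V : Type*} (G : SimpleGraph V) {n m : ℕ}
    (π : Fin n ≃ CnfVar G) (s : ℕ)
    (h : HasCrossMatching G {u | ((π.symm (Sum.inl u) : Fin n) : ℕ) < s} m) :
    2 ^ m ≤ {g : (CnfVar G → Bool) → Bool |
      ∃ a : Fin n → Bool, g = subfun (cnfFun G) π s a}.ncard := by
  obtain ⟨f, hf, hd⟩ := h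
  refine two_pow_le_ncard_subfun _ π s (fun b => crossAssignment G f b ∘ π) (crossWitness G f)
    fun b i => ?_
  simp only [subfun, Function.comp_apply, Equiv.apply_symm_apply]
  exact cnfFun_ite_crossAssignment_crossWitness G (fun v => ((π.symm v : Fin n) : ℕ) < s) f
    (fun j => (hf j).1) (fun j => (hf j).2.1) (fun j => (hf j).2.2) hd b i

/-- if `G` has matching width `t`, then every permutation of the
variables of `CNF(G)` has a prefix over which the number of distinct
subfunctions is at least `2^t`. -/
theorem stmt13 {V : Type*} [Fintype V] (G : SimpleGraph V) (t : ℕ)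
    (ht : matchingWidth G = t) (n : ℕ) (π : Fin n ≃ CnfVar G) :
    ∃ s : ℕ, 2 ^ t ≤ Set.ncard
      {g : (CnfVar G → Bool) → Bool | ∃ a : Fin n → Bool, g = subfun (cnfFun G) π s a} := by
  subst ht
  have hp : Function.Injective fun u : V => ((π.symm (Sum.inl u) : Fin n) : ℕ) :=
    Fin.val_injective.comp (π.symm.injective.comp Sum.inl_injective)
  obtain ⟨σ, hσ⟩ := exists_prefixSet_eq_lt_of_injective _ hp
  obtain ⟨k, hk⟩ := exists_hasCrossMatching_matchingWidth G σ
  obtain ⟨s, hs⟩ := hσ k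
  exact ⟨s, two_pow_le_ncard_subfun_cnfFun G π s (hs ▸ hk)⟩
end

section
/- (Prefix-subfunction bound from path decompositions of incidence graphs.) Let F be a CNF whose incidence graph has a path decomposition (P, B) of width p, with bags B(v_1),...,B(v_r) along P. For each variable X let f(X) be the least j with X ∈ B(v_j), and let π be any ordering of the variables such that f(X) < f(Y) implies X precedes Y. Then for every prefix π_1 of π, the number of distinct subfunctions F_S over assignments S to π_1 is at most 1 + 2^{p+1}. -/
/- A CNF with clause set `ι` and variable set `ν` is modelled as
`occ : ι → ν → Option Bool`: `occ c v = some b` means that variable `v` occurs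
in clause `c` with polarity `b`. -/

/-- The incidence graph of the CNF `occ`: variable vertices and clause vertices,
with a variable adjacent to a clause iff it occurs in it. -/
def incGraph {ν ι : Type*} (occ : ι → ν → Option Bool) : SimpleGraph (ν ⊕ ι) :=
  SimpleGraph.fromRel (fun a b =>
    match a, b with
    | Sum.inl v, Sum.inr c => (occ c v).isSome
    | _, _ => False)

/-- The Boolean function of the CNF `occ`: every clause contains a literal made
true by the assignment. -/
noncomputable def cnfEval {ν ι : Type*} (occ : ι → ν → Option Bool) :
    (ν → Bool) → Bool :=
  fun x => @decide (∀ c : ι, ∃ v b, occ c v = some b ∧ x v = b)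
    (Classical.propDecidable _)

/-- A path decomposition of `G` with bags `B 0, ..., B (rr-1)` in path order:
every vertex is in some bag, every edge is inside some bag, and the bags
containing any fixed vertex form a contiguous interval. -/
def IsPathDecomp {X : Type*} (G : SimpleGraph X) (rr : ℕ)
    (B : Fin rr → Finset X) : Prop :=
  (∀ w, ∃ j, w ∈ B j) ∧
  (∀ a b, G.Adj a b → ∃ j, a ∈ B j ∧ b ∈ B j) ∧
  (∀ w (j₁ j₂ j₃ : Fin rr), j₁ ≤ j₂ → j₂ ≤ j₃ → w ∈ B j₁ → w ∈ B j₃ → w ∈ B j₂)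

lemma Function.FactorsThrough.ncard_range_le {α β γ : Type*} [Nonempty β] [Finite γ]
    {g : α → β} {Φ : α → γ} (h : g.FactorsThrough Φ) : (Set.range g).ncard ≤ Nat.card γ := by
  obtain ⟨b⟩ := ‹Nonempty β›
  calc (Set.range g).ncard ≤ (Set.range (Function.extend Φ g fun _ => b)).ncard :=
        Set.ncard_le_ncard (by rintro _ ⟨a, rfl⟩; exact ⟨Φ a, h.extend_apply _ a⟩)
          (Set.finite_range _)
    _ ≤ Nat.card γ := by
        rw [← Set.image_univ, ← Set.ncard_univ]
        exact Set.ncard_image_le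

lemma subfun_eq_const_of_le {n : ℕ} {V : Type*} (F : (V → Bool) → Bool) (π : Fin n ≃ V)
    {t : ℕ} (ht : n ≤ t) (a : Fin n → Bool) :
    subfun F π t a = fun _ => F fun v => a (π.symm v) := by
  funext y
  simp only [subfun, (π.symm _).isLt.trans_le ht, if_true]

lemma incGraph_adj_of_occ_eq_some {ν ι : Type*} {occ : ι → ν → Option Bool} {c : ι} {v : ν}
    {b : Bool} (h : occ c v = some b) : (incGraph occ).Adj (Sum.inl v) (Sum.inr c) := by
  simp [incGraph, h]

section CNF

variable {ν ι : Type*} (occ : ι → ν → Option Bool) (P : ν → Prop)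

def ClauseSatOn (x : ν → Bool) (c : ι) : Prop :=
  ∃ v, P v ∧ occ c v = some (x v)

def ClauseWithin (c : ι) : Prop :=
  ∀ v b, occ c v = some b → P v

variable {occ P}

lemma cnfEval_ite_eq_true_iff [DecidablePred P] (x y : ν → Bool) :
    cnfEval occ (fun v => if P v then x v else y v) = true ↔
      ∀ c, ClauseSatOn occ P x c ∨ ClauseSatOn occ (fun v => ¬ P v) y c := by
  simp only [cnfEval, decide_eq_true_iff]
  refine forall_congr' fun c => ⟨?_, ?_⟩
  · rintro ⟨v, b, hv, hb⟩
    by_cases hP : P v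
    · rw [if_pos hP] at hb
      exact .inl ⟨v, hP, hb ▸ hv⟩
    · rw [if_neg hP] at hb
      exact .inr ⟨v, hP, hb ▸ hv⟩
  · rintro (⟨v, hP, hv⟩ | ⟨v, hP, hv⟩)
    · exact ⟨v, _, hv, if_pos hP⟩
    · exact ⟨v, _, hv, if_neg hP⟩

lemma cnfEval_ite_eq_false [DecidablePred P] {x : ν → Bool} {c : ι}
    (hc : ClauseWithin occ P c) (hx : ¬ ClauseSatOn occ P x c) (y : ν → Bool) :
    cnfEval occ (fun v => if P v then x v else y v) = false := by
  rw [Bool.eq_false_iff, ne_eq, cnfEval_ite_eq_true_iff]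
  intro h
  rcases h c with hsat | ⟨v, hP, hv⟩
  · exact hx hsat
  · exact hP (hc v _ hv)

lemma cnfEval_ite_congr [DecidablePred P] {x x' : ν → Bool}
    (hx : ∀ c, ClauseWithin occ P c → ClauseSatOn occ P x c)
    (hx' : ∀ c, ClauseWithin occ P c → ClauseSatOn occ P x' c)
    (hcross : ∀ c, ¬ ClauseWithin occ P c → (ClauseSatOn occ P x c ↔ ClauseSatOn occ P x' c))
    (y : ν → Bool) :
    cnfEval occ (fun v => if P v then x v else y v) =
      cnfEval occ (fun v => if P v then x' v else y v) := by
  rw [Bool.eq_iff_iff, cnfEval_ite_eq_true_iff, cnfEval_ite_eq_true_iff]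
  refine forall_congr' fun c => ?_
  by_cases hc : ClauseWithin occ P c
  · simp only [hx c hc, hx' c hc, true_or]
  · exact or_congr_left (hcross c hc)

variable {rr : ℕ} {B : Fin rr → Finset (ν ⊕ ι)} {f : ν → Fin rr} {j : Fin rr}

lemma IsPathDecomp.mem_bag_of_crossing (hpd : IsPathDecomp (incGraph occ) rr B)
    (hf : ∀ X : ν, (Sum.inl X : ν ⊕ ι) ∈ B (f X) ∧ ∀ j, (Sum.inl X : ν ⊕ ι) ∈ B j → f X ≤ j)
    (hP : ∀ v, P v → f v ≤ j) (hnP : ∀ v, ¬ P v → j ≤ f v)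
    {c : ι} {X Y : ν} {bX bY : Bool} (hX : occ c X = some bX) (hY : occ c Y = some bY)
    (hPX : P X) (hPY : ¬ P Y) (hc : Sum.inr c ∉ B j) : Sum.inl X ∈ B j := by
  obtain ⟨j₁, hX₁, hc₁⟩ := hpd.2.1 _ _ (incGraph_adj_of_occ_eq_some hX)
  obtain ⟨j₂, hY₂, hc₂⟩ := hpd.2.1 _ _ (incGraph_adj_of_occ_eq_some hY)
  have hj₂ : j ≤ j₂ := (hnP Y hPY).trans ((hf Y).2 j₂ hY₂)
  have hj₁ : j ≤ j₁ := le_of_not_gt fun h => hc (hpd.2.2 _ j₁ j j₂ h.le hj₂ hc₁ hc₂)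
  exact hpd.2.2 _ (f X) j j₁ (hP X hPX) hj₁ (hf X).1 hX₁

lemma IsPathDecomp.clauseSatOn_of_agree_on_bag (hpd : IsPathDecomp (incGraph occ) rr B)
    (hf : ∀ X : ν, (Sum.inl X : ν ⊕ ι) ∈ B (f X) ∧ ∀ j, (Sum.inl X : ν ⊕ ι) ∈ B j → f X ≤ j)
    (hP : ∀ v, P v → f v ≤ j) (hnP : ∀ v, ¬ P v → j ≤ f v) {x x' : ν → Bool}
    (hvar : ∀ X, Sum.inl X ∈ B j → x X = x' X)
    (hcl : ∀ c, Sum.inr c ∈ B j → (ClauseSatOn occ P x c ↔ ClauseSatOn occ P x' c))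
    {c : ι} (hcross : ¬ ClauseWithin occ P c) (hsat : ClauseSatOn occ P x c) :
    ClauseSatOn occ P x' c := by
  by_cases hc : Sum.inr c ∈ B j
  · exact (hcl c hc).1 hsat
  obtain ⟨v, hPv, hv⟩ := hsat
  obtain ⟨Y, bY, hY, hPY⟩ : ∃ Y bY, occ c Y = some bY ∧ ¬ P Y := by
    by_contra! h
    exact hcross h
  refine ⟨v, hPv, ?_⟩
  rw [← hvar v (hpd.mem_bag_of_crossing hf hP hnP hv hY hPv hPY hc), hv]

variable (occ P) in
open Classical in
noncomputable def bagTrace (s : Finset (ν ⊕ ι)) (x : ν → Bool) : Option (s → Bool) :=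
  if ∃ c, ClauseWithin occ P c ∧ ¬ ClauseSatOn occ P x c then none
  else some fun w => Sum.elim x (fun c => decide (ClauseSatOn occ P x c)) w.1

lemma IsPathDecomp.factorsThrough_bagTrace [DecidablePred P]
    (hpd : IsPathDecomp (incGraph occ) rr B)
    (hf : ∀ X : ν, (Sum.inl X : ν ⊕ ι) ∈ B (f X) ∧ ∀ j, (Sum.inl X : ν ⊕ ι) ∈ B j → f X ≤ j)
    (hP : ∀ v, P v → f v ≤ j) (hnP : ∀ v, ¬ P v → j ≤ f v) :
    Function.FactorsThrough (fun x (y : ν → Bool) => cnfEval occ fun v => if P v then x v else y v)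
      (bagTrace occ P (B j)) := by
  intro x x' h
  funext y
  beta_reduce
  unfold bagTrace at h
  split_ifs at h with hx hx' hx'
  · obtain ⟨c, hc, hxc⟩ := hx
    obtain ⟨c', hc', hxc'⟩ := hx'
    rw [cnfEval_ite_eq_false hc hxc, cnfEval_ite_eq_false hc' hxc']
  · push Not at hx hx'
    have hval := fun w => congrFun (Option.some.inj h) w
    have hvar : ∀ X, Sum.inl X ∈ B j → x X = x' X := fun X hX => hval ⟨_, hX⟩
    have hcl : ∀ c, Sum.inr c ∈ B j → (ClauseSatOn occ P x c ↔ ClauseSatOn occ P x' c) :=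
      fun c hc => decide_eq_decide.1 (hval ⟨_, hc⟩)
    refine cnfEval_ite_congr hx hx' (fun c hc => ⟨?_, ?_⟩) y
    · exact hpd.clauseSatOn_of_agree_on_bag hf hP hnP hvar hcl hc
    · exact hpd.clauseSatOn_of_agree_on_bag hf hP hnP (fun X hX => (hvar X hX).symm)
        (fun c hc => (hcl c hc).symm) hc

end CNF

theorem stmt17_general {ν ι : Type*}
    (occ : ι → ν → Option Bool) (p rr : ℕ) (B : Fin rr → Finset (ν ⊕ ι))
    (hpd : IsPathDecomp (incGraph occ) rr B)
    (hwidth : ∀ j, (B j).card ≤ p + 1)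
    (f : ν → Fin rr)
    (hf : ∀ X : ν, (Sum.inl X : ν ⊕ ι) ∈ B (f X) ∧
      ∀ j, (Sum.inl X : ν ⊕ ι) ∈ B j → f X ≤ j)
    (n : ℕ) (σ : Fin n ≃ ν)
    (hσ : ∀ i i' : Fin n, f (σ i) < f (σ i') → i < i')
    (t : ℕ) :
    Set.ncard {g : (ν → Bool) → Bool | ∃ a : Fin n → Bool, g = subfun (cnfEval occ) σ t a}
      ≤ 1 + 2 ^ (p + 1) := by
  have hset : {g | ∃ a, g = subfun (cnfEval occ) σ t a} = Set.range (subfun (cnfEval occ) σ t) := by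
    simp only [Set.range, eq_comm]
  rw [hset]
  rcases le_or_gt n t with hnt | htn
  · have hfac : (subfun (cnfEval occ) σ t).FactorsThrough
        fun a => cnfEval occ fun v => a (σ.symm v) := fun a a' h => by
      rw [subfun_eq_const_of_le _ _ hnt, subfun_eq_const_of_le _ _ hnt]
      exact funext fun _ => h
    calc _ ≤ Nat.card Bool := hfac.ncard_range_le
      _ ≤ 1 + 2 ^ (p + 1) := by
          rw [Nat.card_eq_fintype_card, Fintype.card_bool]
          have := Nat.one_le_two_pow (n := p + 1)
          omega
  · have hmono : Monotone (f ∘ σ) := fun i i' h => not_lt.1 fun h' => (hσ _ _ h').not_ge h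
    let P : ν → Prop := fun v => ((σ.symm v : Fin n) : ℕ) < t
    obtain ⟨j, hP, hnP⟩ : ∃ j, (∀ v, P v → f v ≤ j) ∧ ∀ v, ¬ P v → j ≤ f v :=
      ⟨f (σ ⟨t, htn⟩), fun v hv => by simpa using hmono (Fin.mk_le_mk.2 hv.le : σ.symm v ≤ _),
        fun v hv => by simpa using hmono (Fin.mk_le_mk.2 (not_lt.1 hv) : _ ≤ σ.symm v)⟩
    have hfac : (subfun (cnfEval occ) σ t).FactorsThrough
        fun a => bagTrace occ P (B j) fun v => a (σ.symm v) :=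
      fun a a' h => hpd.factorsThrough_bagTrace hf hP hnP h
    calc _ ≤ Nat.card (Option (B j → Bool)) := hfac.ncard_range_le
      _ = 1 + 2 ^ (B j).card := by
          classical
          rw [Nat.card_eq_fintype_card, Fintype.card_option, Fintype.card_fun, Fintype.card_bool,
            Fintype.card_coe, add_comm]
      _ ≤ 1 + 2 ^ (p + 1) := Nat.add_le_add_left (Nat.pow_le_pow_right two_pos (hwidth j)) 1

/-- prefix-subfunction bound from path decompositions of incidence
graphs.  If the incidence graph of `occ` has a path decomposition of width `p`,
`f X` is the first bag containing variable `X`, and the variables are ordered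
compatibly with `f`, then every prefix yields at most `1 + 2^{p+1}` distinct
subfunctions. -/
theorem stmt17 {ν ι : Type*} [Fintype ν] [Fintype ι]
    (occ : ι → ν → Option Bool) (p rr : ℕ) (B : Fin rr → Finset (ν ⊕ ι))
    (hpd : IsPathDecomp (incGraph occ) rr B)
    (hwidth : ∀ j, (B j).card ≤ p + 1)
    (f : ν → Fin rr)
    (hf : ∀ X : ν, (Sum.inl X : ν ⊕ ι) ∈ B (f X) ∧
      ∀ j, (Sum.inl X : ν ⊕ ι) ∈ B j → f X ≤ j)
    (n : ℕ) (σ : Fin n ≃ ν)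
    (hσ : ∀ i i' : Fin n, f (σ i) < f (σ i') → i < i')
    (t : ℕ) :
    Set.ncard {g : (ν → Bool) → Bool | ∃ a : Fin n → Bool, g = subfun (cnfEval occ) σ t a}
      ≤ 1 + 2 ^ (p + 1) :=
  stmt17_general occ p rr B hpd hwidth f hf n σ hσ t
end
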